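/- arXiv:2310.17736 — 2 statements merged into one kernel-verified Lean document; each statement's English description precedes it below -/
import Mathlib

section
/- Let d ≥ 1 and let n > d be an integer. There exists a constant C > 0, depending only on n and d, such that for every t ∈ ℝ, every integer k ≥ 1, and every x ∈ ℝ^d, the k-fold convolution satisfies G_{n,t}^{∗k}(x) ≤ C^(k−1) · ⟨t⟩^((k−1)·d) · G_{n,t}(|x|), where G_{n,t}^{∗1} := G_{n,t}(|·|) and G_{n,t}^{∗(k+1)} := G_{n,t}^{∗k} ∗ G_{n,t}(|·|). -/
open MeasureTheory Module

/-- The polynomially decaying function `G_{n,t}(r) = min(1, ⟨t⟩ⁿ/rⁿ)` (with value `1` at `r = 0`). -/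
noncomputable def G (n : ℕ) (t r : ℝ) : ℝ :=
  if r = 0 then 1 else min 1 (Real.sqrt (1 + t^2) ^ n / r ^ n)

/-- `iterConv d n t k` is the `(k+1)`-fold convolution `G_{n,t}^{∗(k+1)}`, i.e.
`iterConv d n t 0 = G_{n,t}(|·|)` and `iterConv d n t (k+1) = (iterConv d n t k) ∗ G_{n,t}(|·|)`. -/
noncomputable def iterConv (d n : ℕ) (t : ℝ) : ℕ → EuclideanSpace ℝ (Fin d) → ℝ
  | 0 => fun x => G n t ‖x‖
  | (k + 1) => fun x => ∫ y, iterConv d n t k y * G n t ‖x - y‖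

/-! Since `|x| ≤ |y| + |x - y|`, one of `|y|`, `|x - y|` is at least `|x| / 2`, so
`G(|y|) G(|x - y|) ≤ 2ⁿ G(|x|) (G(|y|) + G(|x - y|))`. Integrating in `y` shows that
`f ≤ K G(|·|)` implies `f ∗ G(|·|) ≤ 2ⁿ⁺¹ ‖G_{n,t}‖₁ K G(|·|)`, and by scaling
`‖G_{n,t}‖₁ = ⟨t⟩ᵈ ‖G_{n,0}‖₁`, which is finite because `n > d`. Induction on `k` concludes. -/

section G

variable {n : ℕ} {t : ℝ}

lemma one_le_sqrt_one_add_sq (t : ℝ) : 1 ≤ √(1 + t ^ 2) :=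
  Real.one_le_sqrt.2 (le_add_of_nonneg_right (sq_nonneg t))

lemma G_zero_right (n : ℕ) (t : ℝ) : G n t 0 = 1 := if_pos rfl

lemma G_of_pos {r : ℝ} (hr : 0 < r) : G n t r = min 1 ((√(1 + t ^ 2) / r) ^ n) := by
  rw [G, if_neg hr.ne', div_pow]

lemma G_nonneg {r : ℝ} (hr : 0 ≤ r) : 0 ≤ G n t r := by
  rcases hr.eq_or_lt with rfl | hr
  · simp [G_zero_right]
  · rw [G_of_pos hr]
    exact le_min zero_le_one (by positivity)

lemma G_le_one (r : ℝ) : G n t r ≤ 1 := by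
  unfold G
  split_ifs <;> simp

lemma G_le_G_of_le {r s : ℝ} (hr : 0 < r) (hrs : r ≤ s) : G n t s ≤ G n t r := by
  have hs : 0 < s := hr.trans_le hrs
  rw [G_of_pos hr, G_of_pos hs]
  gcongr

lemma G_le_two_pow_mul {c r : ℝ} (hc : 0 ≤ c) (hcr : c ≤ 2 * r) :
    G n t r ≤ 2 ^ n * G n t c := by
  rcases hc.eq_or_lt with rfl | hc
  · rw [G_zero_right, mul_one]
    exact (G_le_one r).trans (one_le_pow₀ one_le_two)
  calc G n t r ≤ G n t (c / 2) := G_le_G_of_le (by positivity) (by linarith)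
    _ = min 1 (2 ^ n * (√(1 + t ^ 2) / c) ^ n) := by
      rw [G_of_pos (by positivity), ← mul_pow]
      congr 2
      field_simp
    _ ≤ 2 ^ n * G n t c := by
      rw [G_of_pos hc, mul_min_of_nonneg _ _ (by positivity), mul_one]
      exact min_le_min (one_le_pow₀ one_le_two) le_rfl

lemma G_mul_G_le {r s c : ℝ} (hr : 0 ≤ r) (hs : 0 ≤ s) (hc : 0 ≤ c) (hcrs : c ≤ r + s) :
    G n t r * G n t s ≤ 2 ^ n * G n t c * (G n t r + G n t s) := by
  have hGr : 0 ≤ G n t r := G_nonneg hr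
  have hGs : 0 ≤ G n t s := G_nonneg hs
  have hGc : 0 ≤ 2 ^ n * G n t c := by have := G_nonneg (n := n) (t := t) hc; positivity
  rcases le_total c (2 * r) with h | h
  · calc G n t r * G n t s ≤ 2 ^ n * G n t c * G n t s :=
          mul_le_mul_of_nonneg_right (G_le_two_pow_mul hc h) hGs
      _ ≤ _ := mul_le_mul_of_nonneg_left (by linarith) hGc
  · calc G n t r * G n t s ≤ G n t r * (2 ^ n * G n t c) :=
          mul_le_mul_of_nonneg_left (G_le_two_pow_mul hc (by linarith)) hGr
      _ ≤ _ := by rw [mul_comm]; exact mul_le_mul_of_nonneg_left (by linarith) hGc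

lemma G_eq_G_zero_inv_mul (n : ℕ) (t r : ℝ) : G n t r = G n 0 ((√(1 + t ^ 2))⁻¹ * r) := by
  have ha : 0 < √(1 + t ^ 2) := one_pos.trans_le (one_le_sqrt_one_add_sq t)
  rcases eq_or_ne r 0 with rfl | hr
  · simp [G_zero_right]
  · simp [G, hr, ha.ne', mul_pow, div_eq_mul_inv, mul_comm]

lemma G_le_mul_one_add_rpow_neg {r : ℝ} (hr : 0 ≤ r) :
    G n t r ≤ (2 * √(1 + t ^ 2)) ^ n * (1 + r) ^ (-(n : ℝ)) := by
  set a := √(1 + t ^ 2)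
  have ha : 1 ≤ a := one_le_sqrt_one_add_sq t
  rw [Real.rpow_neg (by positivity), Real.rpow_natCast, ← div_eq_mul_inv,
    le_div_iff₀ (by positivity)]
  rcases le_or_gt r a with hra | hra
  · calc G n t r * (1 + r) ^ n ≤ 1 * (2 * a) ^ n :=
          mul_le_mul (G_le_one r) (pow_le_pow_left₀ (by positivity) (by linarith) n)
            (by positivity) zero_le_one
      _ = (2 * a) ^ n := one_mul _
  · have hr : 0 < r := by linarith
    calc G n t r * (1 + r) ^ n ≤ (a / r) ^ n * (2 * r) ^ n := by
          rw [G_of_pos hr]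
          exact mul_le_mul (min_le_right _ _) (pow_le_pow_left₀ (by positivity) (by linarith) n)
            (by positivity) (by positivity)
      _ = (2 * a) ^ n := by
          rw [← mul_pow]
          congr 1
          field_simp

lemma measurable_G (n : ℕ) (t : ℝ) : Measurable (G n t) :=
  Measurable.ite (measurableSet_singleton 0) measurable_const
    (measurable_const.min (measurable_const.div (measurable_id.pow_const n)))

end G

section HaarMeasure

variable {E : Type*} [NormedAddCommGroup E] [NormedSpace ℝ E] [FiniteDimensional ℝ E]
  [MeasurableSpace E] [BorelSpace E] (μ : Measure E) [μ.IsAddHaarMeasure] {n : ℕ}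

lemma integrable_G_norm (hn : finrank ℝ E < n) (t : ℝ) : Integrable (fun x => G n t ‖x‖) μ := by
  refine ((integrable_one_add_norm (μ := μ) (r := n) (by exact_mod_cast hn)).const_mul
    ((2 * √(1 + t ^ 2)) ^ n)).mono ((measurable_G n t).comp measurable_norm).aestronglyMeasurable
    (ae_of_all _ fun x => ?_)
  rw [Real.norm_of_nonneg (G_nonneg (norm_nonneg x)), Real.norm_of_nonneg (by positivity)]
  exact G_le_mul_one_add_rpow_neg (norm_nonneg x)

lemma integral_G_norm (n : ℕ) (t : ℝ) :
    ∫ x, G n t ‖x‖ ∂μ = √(1 + t ^ 2) ^ finrank ℝ E * ∫ x, G n 0 ‖x‖ ∂μ := by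
  have ha : 0 ≤ √(1 + t ^ 2) := Real.sqrt_nonneg _
  have h_scale : ∀ x : E, G n t ‖x‖ = G n 0 ‖(√(1 + t ^ 2))⁻¹ • x‖ := fun x => by
    rw [G_eq_G_zero_inv_mul, norm_smul, Real.norm_of_nonneg (inv_nonneg.2 ha)]
  simp_rw [h_scale]
  rw [Measure.integral_comp_inv_smul_of_nonneg μ (fun x => G n 0 ‖x‖) ha, smul_eq_mul]

lemma integral_mul_G_norm_sub_le {f : E → ℝ} {K t : ℝ} (hn : finrank ℝ E < n)
    (hf₀ : ∀ y, 0 ≤ f y) (hf : ∀ y, f y ≤ K * G n t ‖y‖) (x : E) :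
    ∫ y, f y * G n t ‖x - y‖ ∂μ ≤ K * (2 ^ (n + 1) * ∫ y, G n t ‖y‖ ∂μ) * G n t ‖x‖ := by
  have hK : 0 ≤ K := by simpa [G_zero_right] using (hf₀ 0).trans (hf 0)
  have hG := integrable_G_norm μ hn t
  have h_rev : (fun y => G n t ‖x - y‖) = fun y => G n t ‖y - x‖ := by
    simp only [norm_sub_rev x]
  have hG_sub : Integrable (fun y => G n t ‖x - y‖) μ := h_rev ▸ hG.comp_sub_right x
  have h_sub : ∫ y, G n t ‖x - y‖ ∂μ = ∫ y, G n t ‖y‖ ∂μ := by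
    rw [h_rev, integral_sub_right_eq_self (fun y => G n t ‖y‖) x]
  calc ∫ y, f y * G n t ‖x - y‖ ∂μ
      ≤ ∫ y, K * 2 ^ n * G n t ‖x‖ * (G n t ‖y‖ + G n t ‖x - y‖) ∂μ := by
        refine integral_mono_of_nonneg (ae_of_all _ fun y => ?_) ((hG.add hG_sub).const_mul _)
          (ae_of_all _ fun y => ?_)
        · exact mul_nonneg (hf₀ y) (G_nonneg (norm_nonneg _))
        · calc f y * G n t ‖x - y‖ ≤ K * (G n t ‖y‖ * G n t ‖x - y‖) := by
                rw [← mul_assoc]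
                exact mul_le_mul_of_nonneg_right (hf y) (G_nonneg (norm_nonneg _))
            _ ≤ K * (2 ^ n * G n t ‖x‖ * (G n t ‖y‖ + G n t ‖x - y‖)) :=
                mul_le_mul_of_nonneg_left (G_mul_G_le (norm_nonneg _) (norm_nonneg _)
                  (norm_nonneg _) (by simpa using norm_add_le y (x - y))) hK
            _ = _ := by ring
    _ = K * (2 ^ (n + 1) * ∫ y, G n t ‖y‖ ∂μ) * G n t ‖x‖ := by
        rw [integral_const_mul, integral_add hG hG_sub, h_sub]
        ring

end HaarMeasure

lemma iterConv_nonneg (d n : ℕ) (t : ℝ) :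
    ∀ (k : ℕ) (x : EuclideanSpace ℝ (Fin d)), 0 ≤ iterConv d n t k x
  | 0, x => G_nonneg (norm_nonneg x)
  | k + 1, _ => integral_nonneg fun y =>
      mul_nonneg (iterConv_nonneg d n t k y) (G_nonneg (norm_nonneg _))

lemma iterConv_le {d n : ℕ} (hn : d < n) (t : ℝ) (k : ℕ) (x : EuclideanSpace ℝ (Fin d)) :
    iterConv d n t k x ≤
      (2 ^ (n + 1) * ∫ z : EuclideanSpace ℝ (Fin d), G n 0 ‖z‖) ^ k *
        √(1 + t ^ 2) ^ (k * d) * G n t ‖x‖ := by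
  induction k generalizing x with
  | zero => simp [iterConv]
  | succ k ih =>
    have hn' : finrank ℝ (EuclideanSpace ℝ (Fin d)) < n := by rwa [finrank_euclideanSpace_fin]
    calc iterConv d n t (k + 1) x = ∫ y, iterConv d n t k y * G n t ‖x - y‖ := rfl
      _ ≤ _ := integral_mul_G_norm_sub_le volume hn' (iterConv_nonneg d n t k) ih x
      _ = _ := by
        rw [integral_G_norm volume n t, finrank_euclideanSpace_fin]
        ring

theorem stmt9_general (d n : ℕ) (hn : d < n) :
    ∃ C : ℝ, 0 < C ∧ ∀ (t : ℝ) (k : ℕ) (x : EuclideanSpace ℝ (Fin d)),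
      iterConv d n t k x ≤ C ^ k * Real.sqrt (1 + t^2) ^ (k * d) * G n t ‖x‖ := by
  set I := ∫ z : EuclideanSpace ℝ (Fin d), G n 0 ‖z‖
  have hC : 0 ≤ 2 ^ (n + 1) * I := by
    have : 0 ≤ I := integral_nonneg fun z => G_nonneg (norm_nonneg z)
    positivity
  refine ⟨2 ^ (n + 1) * I + 1, by positivity, fun t k x => (iterConv_le hn t k x).trans ?_⟩
  gcongr
  · exact G_nonneg (norm_nonneg x)
  · linarith

/-- decay of iterated convolutions of `G_{n,t}`;
`iterConv d n t (k-1)` is the `k`-fold convolution `G_{n,t}^{∗k}` for `k ≥ 1`. -/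
theorem stmt9 (d n : ℕ) (hd : 1 ≤ d) (hn : d < n) :
    ∃ C : ℝ, 0 < C ∧ ∀ (t : ℝ) (k : ℕ) (x : EuclideanSpace ℝ (Fin d)),
      iterConv d n t k x ≤ C ^ k * Real.sqrt (1 + t^2) ^ (k * d) * G n t ‖x‖ :=
  stmt9_general d n hn
end

section
/- Let A be a normed ring (e.g. a C*-algebra), let N, M ∈ ℕ with both N and M odd, and let a₁, …, a_N, b₁, …, b_M ∈ A. Then ‖ {a₁⋯a_N, b₁⋯b_M} ‖ ≤ Σ_{i=1}^N Σ_{j=1}^M ( Π_{k≠i} ‖a_k‖ ) · ( Π_{l≠j} ‖b_l‖ ) · ‖ {a_i, b_j} ‖, where {x,y} := xy + yx. -/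
/-!
For `x` and `P = y₁ ⋯ yₙ` the twisted commutator `x P - (-1)ⁿ P x` telescopes: peeling off
`y₁` gives `(x y₁ + y₁ x) y₂ ⋯ yₙ - y₁ (x y₂ ⋯ yₙ - (-1)ⁿ⁻¹ y₂ ⋯ yₙ x)`, so its norm is at most
`∑ⱼ (∏_{k ≠ j} ‖yₖ‖) ‖{x, yⱼ}‖`. For odd `n` the twisted commutator is the anticommutator
`{x, P}`; applying this once with `x = a₁ ⋯ a_N` over the `bⱼ`, and then to each `{a₁ ⋯ a_N, bⱼ}`
over the `aᵢ`, gives the estimate.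
-/

open Finset

theorem Fin.prod_univ_erase {β : Type*} [CommMonoid β] {n : ℕ} (g : Fin (n + 1) → β)
    (p : Fin (n + 1)) :
    ∏ k ∈ univ.erase p, g k = ∏ i : Fin n, g (p.succAbove i) := by
  rw [Fin.univ_succAbove n p, erase_cons, prod_map]
  rfl

theorem Fin.prod_univ_erase_zero {β : Type*} [CommMonoid β] {n : ℕ} (g : Fin (n + 1) → β) :
    ∏ k ∈ univ.erase 0, g k = ∏ i : Fin n, g i.succ := by
  simp [Fin.prod_univ_erase]

theorem Fin.prod_univ_erase_succ {β : Type*} [CommMonoid β] {n : ℕ} (g : Fin (n + 1) → β)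
    (j : Fin n) :
    ∏ k ∈ univ.erase j.succ, g k = g 0 * ∏ k ∈ univ.erase j, g k.succ := by
  cases n with
  | zero => exact j.elim0
  | succ n =>
    rw [Fin.prod_univ_erase, Fin.prod_univ_erase, Fin.prod_univ_succ]
    simp [Fin.succ_succAbove_succ]

/-- The factor `c` makes the bound hold for `n = 0` without assuming `‖1‖ ≤ 1`. -/
theorem norm_mul_prod_ofFn_le {A : Type*} [SeminormedRing A] (c : A) :
    ∀ {n : ℕ} (f : Fin n → A), ‖c * (List.ofFn f).prod‖ ≤ ‖c‖ * ∏ i, ‖f i‖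
  | 0, _ => by simp
  | n + 1, f => by
    rw [List.ofFn_succ, List.prod_cons, ← mul_assoc, Fin.prod_univ_succ, ← mul_assoc]
    exact (norm_mul_prod_ofFn_le _ _).trans
      (mul_le_mul_of_nonneg_right (norm_mul_le _ _) (by positivity))

theorem mul_mul_sub_neg_one_pow_mul {A : Type*} [Ring A] (x y P : A) (n : ℕ) :
    x * (y * P) - (-1) ^ (n + 1) * (y * P * x)
      = (x * y + y * x) * P - y * (x * P - (-1) ^ n * (P * x)) := by
  have hy : (-1 : A) ^ n * y = y * (-1) ^ n := ((Commute.neg_one_left y).pow_left n).eq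
  rw [pow_succ, mul_neg_one, mul_sub, ← mul_assoc y ((-1) ^ n), ← hy]
  noncomm_ring

theorem norm_mul_prod_ofFn_sub_neg_one_pow_le {A : Type*} [SeminormedRing A] (x : A) :
    ∀ {n : ℕ} (f : Fin n → A),
      ‖x * (List.ofFn f).prod - (-1) ^ n * ((List.ofFn f).prod * x)‖
        ≤ ∑ j, (∏ k ∈ univ.erase j, ‖f k‖) * ‖x * f j + f j * x‖
  | 0, _ => by simp
  | n + 1, f => by
    set P := (List.ofFn fun i => f i.succ).prod
    have ih := norm_mul_prod_ofFn_sub_neg_one_pow_le x fun i => f i.succ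
    rw [List.ofFn_succ, List.prod_cons, mul_mul_sub_neg_one_pow_mul, Fin.sum_univ_succ,
      Fin.prod_univ_erase_zero]
    refine (norm_sub_le _ _).trans (add_le_add ?_ ?_)
    · rw [mul_comm]
      exact norm_mul_prod_ofFn_le _ _
    · calc ‖f 0 * (x * P - (-1) ^ n * (P * x))‖
          ≤ ‖f 0‖ * ∑ j : Fin n, (∏ k ∈ univ.erase j, ‖f k.succ‖) *
              ‖x * f j.succ + f j.succ * x‖ :=
            (norm_mul_le _ _).trans (mul_le_mul_of_nonneg_left ih (norm_nonneg _))
        _ = ∑ j : Fin n, (∏ k ∈ univ.erase j.succ, ‖f k‖) * ‖x * f j.succ + f j.succ * x‖ := by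
          simp only [mul_sum, Fin.prod_univ_erase_succ, mul_assoc]

theorem norm_mul_prod_ofFn_add_le_of_odd {A : Type*} [SeminormedRing A] (x : A) {n : ℕ}
    (hn : Odd n) (f : Fin n → A) :
    ‖x * (List.ofFn f).prod + (List.ofFn f).prod * x‖
      ≤ ∑ j, (∏ k ∈ univ.erase j, ‖f k‖) * ‖x * f j + f j * x‖ := by
  simpa [hn.neg_one_pow] using norm_mul_prod_ofFn_sub_neg_one_pow_le x f

/-- higher anticommutator estimate in a normed ring, for products of
`N` and `M` factors where both `N` and `M` are odd. -/
theorem stmt17 {A : Type*} [NormedRing A] (N M : ℕ) (hN : Odd N) (hM : Odd M)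
    (a : Fin N → A) (b : Fin M → A) :
    ‖(List.ofFn a).prod * (List.ofFn b).prod + (List.ofFn b).prod * (List.ofFn a).prod‖
      ≤ ∑ i : Fin N, ∑ j : Fin M,
          (∏ k ∈ Finset.univ.erase i, ‖a k‖) * (∏ l ∈ Finset.univ.erase j, ‖b l‖) *
            ‖a i * b j + b j * a i‖ := by
  set α := (List.ofFn a).prod
  have hb (j : Fin M) : ‖α * b j + b j * α‖
      ≤ ∑ i, (∏ k ∈ univ.erase i, ‖a k‖) * ‖a i * b j + b j * a i‖ := by
    rw [add_comm]
    simpa only [add_comm (b j * _)] using norm_mul_prod_ofFn_add_le_of_odd (b j) hN a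
  calc ‖α * (List.ofFn b).prod + (List.ofFn b).prod * α‖
      ≤ ∑ j, (∏ l ∈ univ.erase j, ‖b l‖) * ‖α * b j + b j * α‖ :=
        norm_mul_prod_ofFn_add_le_of_odd α hM b
    _ ≤ ∑ j, (∏ l ∈ univ.erase j, ‖b l‖) *
          ∑ i, (∏ k ∈ univ.erase i, ‖a k‖) * ‖a i * b j + b j * a i‖ := by
        gcongr with j
        exact hb j
    _ = _ := by
        simp only [mul_sum]
        rw [sum_comm]
        exact sum_congr rfl fun i _ => sum_congr rfl fun j _ => by ring
end
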